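/- For all t with -1 < t < 1, ∫_{-∞}^{∞} z e^{tz} e^{-z}/(1 + e^{-z})^2 dz = π csc(πt)(1 - πt cot(πt)) (with the convention of the analytic continuation at t = 0, where the value is 0). -/

import Mathlib

/-!
With the logistic function `σ z = 1 / (1 + exp (-z))`, whose derivative is the logistic density,
the substitution `y = σ z` turns the moment generating function `M s = ∫ exp (s z) σ'(z) dz`
into the Beta integral `∫₀¹ y ^ s (1 - y) ^ (-s) dy = Γ(1 + s) Γ(1 - s) = π s / sin (π s)`.
The integral in question is `M'(t)`, by differentiation under the integral sign: on `|s| < 1` the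
integrand is dominated by `exp (-(1 - |s|) |z|)`. At `t = 0` the integrand `z σ'(z)` is odd.
-/

open Real MeasureTheory Filter Set Topology

theorem integral_Ioo_rpow_mul_one_sub_rpow {a b : ℝ} (ha : 0 < a) (hb : 0 < b) :
    ∫ y in Ioo (0 : ℝ) 1, y ^ (a - 1) * (1 - y) ^ (b - 1) =
      Gamma a * Gamma b / Gamma (a + b) := by
  have hβ := Complex.betaIntegral_eq_Gamma_mul_div a b (by simpa) (by simpa)
  rw [← Complex.ofReal_add, Complex.Gamma_ofReal, Complex.Gamma_ofReal, Complex.Gamma_ofReal,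
    Complex.betaIntegral, intervalIntegral.integral_of_le zero_le_one] at hβ
  rw [← integral_Ioc_eq_integral_Ioo]
  suffices h : ((∫ y in Ioc (0 : ℝ) 1, y ^ (a - 1) * (1 - y) ^ (b - 1) : ℝ) : ℂ)
      = Gamma a * Gamma b / Gamma (a + b) by exact_mod_cast h
  rw [← hβ, ← integral_complex_ofReal]
  refine setIntegral_congr_fun measurableSet_Ioc fun y hy ↦ ?_
  have h1y : 0 ≤ 1 - y := sub_nonneg.2 hy.2
  push_cast [Complex.ofReal_cpow hy.1.le, Complex.ofReal_cpow h1y]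
  ring_nf

theorem integrable_exp_neg_mul_abs {c : ℝ} (hc : 0 < c) :
    Integrable fun z : ℝ ↦ exp (-(c * |z|)) := by
  refine (Continuous.locallyIntegrable (by fun_prop))
    |>.integrable_of_isBigO_atTop_of_norm_isNegInvariant (g := fun z ↦ exp (-c * z))
      (.of_forall fun z ↦ by simp) ?_
    ⟨Ioi 0, Ioi_mem_atTop 0, exp_neg_integrableOn_Ioi 0 hc⟩
  refine EventuallyEq.isBigO ?_
  filter_upwards [eventually_ge_atTop 0] with z hz
  rw [abs_of_nonneg hz, neg_mul]

theorem abs_mul_exp_neg_mul_abs_le {c : ℝ} (hc : 0 < c) (z : ℝ) :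
    |z| * exp (-(c * |z|)) ≤ 2 / c * exp (-(c / 2 * |z|)) := by
  set u := c / 2 * |z|
  have hu : u * exp (-u) ≤ 1 := by
    calc u * exp (-u) ≤ exp u * exp (-u) := by gcongr; linarith [add_one_le_exp u]
      _ = 1 := by rw [← exp_add, add_neg_cancel, exp_zero]
  calc |z| * exp (-(c * |z|)) = 2 / c * (u * exp (-u)) * exp (-u) := by
        rw [mul_assoc, mul_assoc, ← exp_add]; simp only [u]; field_simp; ring_nf
    _ ≤ 2 / c * 1 * exp (-u) := by gcongr
    _ = 2 / c * exp (-u) := by rw [mul_one]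

theorem Gamma_one_add_mul_Gamma_one_sub {s : ℝ} (hs : s ≠ 0) :
    Gamma (1 + s) * Gamma (1 - s) = π * s / sin (π * s) := by
  rw [add_comm, Gamma_add_one hs, mul_assoc, Gamma_mul_Gamma_one_sub]
  ring

theorem hasDerivAt_pi_mul_div_sin {t : ℝ} (h : sin (π * t) ≠ 0) :
    HasDerivAt (fun s ↦ π * s / sin (π * s))
      (π * (1 / sin (π * t)) * (1 - π * t * (cos (π * t) / sin (π * t)))) t := by
  have hsin : HasDerivAt (fun s ↦ sin (π * s)) (cos (π * t) * π) t := by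
    simpa using ((hasDerivAt_id t).const_mul π).sin
  refine (((hasDerivAt_id' t).const_mul π).div hsin h).congr_deriv ?_
  field_simp

noncomputable def logistic (z : ℝ) : ℝ := (1 + exp (-z))⁻¹

noncomputable def logisticDensity (z : ℝ) : ℝ := exp (-z) / (1 + exp (-z)) ^ 2

theorem logistic_pos (z : ℝ) : 0 < logistic z := by unfold logistic; positivity

theorem logisticDensity_pos (z : ℝ) : 0 < logisticDensity z := by
  unfold logisticDensity; positivity

theorem one_sub_logistic (z : ℝ) : 1 - logistic z = exp (-z) * logistic z := by
  have : 1 + exp (-z) ≠ 0 := by positivity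
  unfold logistic
  field_simp
  ring

theorem hasDerivAt_logistic (z : ℝ) : HasDerivAt logistic (logisticDensity z) z := by
  have h : HasDerivAt (fun z ↦ 1 + exp (-z)) (-exp (-z)) z := by
    simpa using ((hasDerivAt_neg z).exp).const_add 1
  have h' := h.inv (by positivity)
  rwa [neg_neg] at h'

theorem monotone_logistic : Monotone logistic :=
  monotone_of_hasDerivAt_nonneg hasDerivAt_logistic fun z ↦ (logisticDensity_pos z).le

theorem image_logistic : logistic '' univ = Ioo 0 1 := by
  rw [image_univ]
  refine Subset.antisymm ?_ fun y hy ↦ ⟨log (y / (1 - y)), ?_⟩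
  · rintro _ ⟨z, rfl⟩
    have := mul_pos (exp_pos (-z)) (logistic_pos z)
    exact ⟨logistic_pos z, by linarith [one_sub_logistic z]⟩
  · have h1y : 0 < 1 - y := sub_pos.2 hy.2
    have := hy.1.ne'
    rw [logistic, exp_neg, exp_log (div_pos hy.1 h1y)]
    field_simp
    ring

theorem logistic_rpow_mul_one_sub_logistic_rpow_neg (s z : ℝ) :
    logistic z ^ s * (1 - logistic z) ^ (-s) = exp (s * z) := by
  have hL := logistic_pos z
  rw [one_sub_logistic, mul_rpow (exp_pos _).le hL.le, ← exp_mul, rpow_neg hL.le,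
    mul_left_comm, mul_inv_cancel₀ (rpow_pos_of_pos hL s).ne', mul_one]
  ring_nf

@[fun_prop]
theorem continuous_logisticDensity : Continuous logisticDensity := by
  unfold logisticDensity
  exact Continuous.div (by fun_prop) (by fun_prop) fun z ↦ by positivity

theorem logisticDensity_neg (z : ℝ) : logisticDensity (-z) = logisticDensity z := by
  have h : exp z * exp (-z) = 1 := by rw [← exp_add, add_neg_cancel, exp_zero]
  unfold logisticDensity
  rw [neg_neg, div_eq_div_iff (by positivity) (by positivity)]
  linear_combination (exp (-z) - exp z) * h

theorem logisticDensity_le_exp_neg_abs (z : ℝ) : logisticDensity z ≤ exp (-|z|) := by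
  wlog hz : 0 ≤ z generalizing z
  · simpa [logisticDensity_neg] using this (-z) (by linarith)
  rw [abs_of_nonneg hz]
  exact div_le_self (exp_pos _).le (one_le_pow₀ (le_add_of_nonneg_right (exp_pos _).le))

theorem exp_mul_mul_logisticDensity_le (s z : ℝ) :
    exp (s * z) * logisticDensity z ≤ exp (-((1 - |s|) * |z|)) := by
  calc exp (s * z) * logisticDensity z ≤ exp (s * z) * exp (-|z|) := by
        gcongr; exact logisticDensity_le_exp_neg_abs z
    _ = exp (s * z - |z|) := by rw [← exp_add, sub_eq_add_neg]
    _ ≤ exp (-((1 - |s|) * |z|)) := by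
        have : s * z ≤ |s| * |z| := (le_abs_self _).trans (abs_mul s z).le
        gcongr
        linarith

theorem integrable_exp_mul_mul_logisticDensity {s : ℝ} (hs : |s| < 1) :
    Integrable fun z ↦ exp (s * z) * logisticDensity z :=
  (integrable_exp_neg_mul_abs (sub_pos.2 hs)).mono'
    (by fun_prop : Continuous _).aestronglyMeasurable (.of_forall fun z ↦ by
      rw [norm_of_nonneg (mul_pos (exp_pos _) (logisticDensity_pos z)).le]
      exact exp_mul_mul_logisticDensity_le s z)

theorem integral_exp_mul_mul_logisticDensity {s : ℝ} (h1 : -1 < s) (h2 : s < 1) :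
    ∫ z, exp (s * z) * logisticDensity z = Gamma (1 + s) * Gamma (1 - s) := by
  have hsub := integral_image_eq_integral_deriv_smul_of_monotoneOn MeasurableSet.univ
    (fun z _ ↦ (hasDerivAt_logistic z).hasDerivWithinAt) (monotone_logistic.monotoneOn _)
    (fun y ↦ y ^ s * (1 - y) ^ (-s))
  rw [image_logistic, Measure.restrict_univ] at hsub
  have hβ := integral_Ioo_rpow_mul_one_sub_rpow (a := 1 + s) (b := 1 - s)
    (by linarith) (by linarith)
  rw [show 1 + s + (1 - s) = 2 by ring, Gamma_two, div_one, add_sub_cancel_left,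
    sub_sub_cancel_left] at hβ
  simp only [hsub, smul_eq_mul, logistic_rpow_mul_one_sub_logistic_rpow_neg] at hβ
  rw [← hβ]
  simp_rw [mul_comm (exp _)]

theorem hasDerivAt_integral_exp_mul_mul_logisticDensity {t : ℝ} (ht : |t| < 1) :
    HasDerivAt (fun s ↦ ∫ z, exp (s * z) * logisticDensity z)
      (∫ z, z * exp (t * z) * logisticDensity z) t := by
  set ε := (1 - |t|) / 2 with hε
  have hε0 : 0 < ε := by linarith
  refine (hasDerivAt_integral_of_dominated_loc_of_deriv_le
    (F := fun s z ↦ exp (s * z) * logisticDensity z)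
    (F' := fun s z ↦ z * exp (s * z) * logisticDensity z) (Metric.ball_mem_nhds t hε0)
    (.of_forall fun s ↦ (by fun_prop : Continuous _).aestronglyMeasurable)
    (integrable_exp_mul_mul_logisticDensity ht) (by fun_prop : Continuous _).aestronglyMeasurable
    (.of_forall fun z s hs ↦ ?_) ((integrable_exp_neg_mul_abs (half_pos hε0)).const_mul (2 / ε))
    (.of_forall fun z s _ ↦ ?_)).2
  · have hs : |s| < 1 - ε := by
      have := abs_sub_abs_le_abs_sub s t
      rw [Metric.mem_ball, dist_eq] at hs
      linarith
    calc ‖z * exp (s * z) * logisticDensity z‖ = |z| * (exp (s * z) * logisticDensity z) := by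
          rw [norm_mul, norm_mul, norm_of_nonneg (exp_pos _).le,
            norm_of_nonneg (logisticDensity_pos z).le, norm_eq_abs, mul_assoc]
      _ ≤ |z| * exp (-(ε * |z|)) := by
          gcongr
          refine (exp_mul_mul_logisticDensity_le s z).trans (exp_le_exp.2 ?_)
          nlinarith [abs_nonneg z]
      _ ≤ 2 / ε * exp (-(ε / 2 * |z|)) := abs_mul_exp_neg_mul_abs_le hε0 z
  · exact (((hasDerivAt_mul_const z).exp).mul_const _).congr_deriv (by ring)

theorem integral_mul_logisticDensity : ∫ z, z * logisticDensity z = 0 := by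
  have h : ∫ z, z * logisticDensity z = -∫ z, z * logisticDensity z := by
    conv_lhs => rw [← integral_neg_eq_self]
    simp only [logisticDensity_neg, neg_mul, integral_neg]
  linarith

theorem logistic_first_moment_mgf (t : ℝ) (h1 : -1 < t) (h2 : t < 1) :
    ∫ z : ℝ, z * Real.exp (t * z) * (Real.exp (-z) / (1 + Real.exp (-z)) ^ 2)
      = if t = 0 then 0
        else π * (1 / Real.sin (π * t)) * (1 - π * t * (Real.cos (π * t) / Real.sin (π * t))) := by
  change ∫ z, z * exp (t * z) * logisticDensity z = _
  split_ifs with ht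
  · simpa [ht] using integral_mul_logisticDensity
  have hsin : sin (π * t) ≠ 0 := by
    rw [Ne, sin_eq_zero_iff_of_lt_of_lt (by nlinarith [pi_pos]) (by nlinarith [pi_pos])]
    exact mul_ne_zero pi_ne_zero ht
  have hmgf : (fun s ↦ ∫ z, exp (s * z) * logisticDensity z) =ᶠ[𝓝 t]
      fun s ↦ π * s / sin (π * s) := by
    filter_upwards [Ioo_mem_nhds h1 h2, isOpen_ne.mem_nhds ht] with s hs hs0
    rw [integral_exp_mul_mul_logisticDensity hs.1 hs.2, Gamma_one_add_mul_Gamma_one_sub hs0]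
  exact (hasDerivAt_integral_exp_mul_mul_logisticDensity (abs_lt.2 ⟨h1, h2⟩)).unique
    (hmgf.hasDerivAt_iff.2 (hasDerivAt_pi_mul_div_sin hsin))
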